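/- arXiv:2204.09356 — 2 statements merged into one kernel-verified Lean document; each statement's English description precedes it below -/
import Mathlib

section
/- Let n ≥ 2 and suppose h1, h_{12},...,h_{1n} are quadratic forms in ℂ[X1,...,Xn] with 0 = h1·X1^4 + Σ_{j=2}^n h_{1j}·(X1+Xj)^4. Then h1 = 0 and h_{1j} = 0 for all j. -/
/-!
Fix `j ≠ 0` and compare degrees in `X j`. The summand `h j * (X 0 + X j) ^ 4` has degree
`degreeOf j (h j) + 4 ≥ 4` in `X j` as soon as `h j ≠ 0`, while every other summand is a quadratic
form times a polynomial not involving `X j`, hence of degree at most `2` in `X j`. So no cancellation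
is possible and `h j = 0`; what is left is `h₁ * X 0 ^ 4 = 0`.
-/

open MvPolynomial

namespace MvPolynomial

variable {R σ : Type*} [CommSemiring R] {p q r : MvPolynomial σ R}

theorem IsHomogeneous.degreeOf_le {n : ℕ} (hp : p.IsHomogeneous n) (i : σ) : p.degreeOf i ≤ n :=
  (degreeOf_le_totalDegree p i).trans hp.totalDegree_le

theorem degreeOf_X_add_X_of_ne {i k j : σ} (hi : j ≠ i) (hk : j ≠ k) :
    (X i + X k : MvPolynomial σ R).degreeOf j = 0 := by
  refine Nat.eq_zero_of_le_zero ((degreeOf_add_le j _ _).trans ?_)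
  simp [degreeOf_X_of_ne hi, degreeOf_X_of_ne hk]

theorem degreeOf_X_add_X_self [Nontrivial R] {i j : σ} (h : i ≠ j) :
    (X i + X j : MvPolynomial σ R).degreeOf j = 1 := by
  rw [add_comm, degreeOf_add_eq_of_degreeOf_lt] <;> simp [degreeOf_X_of_ne h.symm]

theorem degreeOf_mul_le_of_degreeOf_eq_zero {i : σ} (hq : q.degreeOf i = 0) :
    (p * q).degreeOf i ≤ p.degreeOf i := by
  simpa [hq] using degreeOf_mul_le i p q

theorem degreeOf_mul_X_add_X_pow_le {i k j : σ} (hi : j ≠ i) (hk : j ≠ k) (m : ℕ) :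
    (p * (X i + X k) ^ m).degreeOf j ≤ p.degreeOf j := by
  refine degreeOf_mul_le_of_degreeOf_eq_zero (Nat.eq_zero_of_le_zero ?_)
  exact (degreeOf_pow_le j _ m).trans (by rw [degreeOf_X_add_X_of_ne hi hk, mul_zero])

variable [NoZeroDivisors R]

theorem degreeOf_X_add_X_self_pow [Nontrivial R] {i j : σ} (h : i ≠ j) (m : ℕ) :
    ((X i + X j) ^ m : MvPolynomial σ R).degreeOf j = m := by
  have hne : (X i + X j : MvPolynomial σ R) ≠ 0 := fun h0 => by
    simpa [h0] using degreeOf_X_add_X_self (R := R) h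
  rw [degreeOf_pow_eq j _ m hne, degreeOf_X_add_X_self h, mul_one]

theorem eq_zero_of_mul_add_eq_zero {i : σ} (hr : r.degreeOf i < q.degreeOf i)
    (h : p * q + r = 0) : p = 0 := by
  by_contra hp
  have hq : q ≠ 0 := by rintro rfl; simp at hr
  have hpq : r.degreeOf i < (p * q).degreeOf i := by
    rw [degreeOf_mul_eq hp hq]; omega
  have hsum := degreeOf_add_eq_of_degreeOf_lt hpq
  rw [h, degreeOf_zero] at hsum
  omega

end MvPolynomial

/-- In `n + 2 ≥ 2` variables (paper's `X₁` is `X 0`): if quadratic forms `h₁`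
and `h j` (for `j ≠ 0`, i.e. `j ∈ {2,…,n}` in the paper's numbering) satisfy
`0 = h₁·X₁⁴ + Σ_j h j·(X₁+Xⱼ)⁴`, then `h₁ = 0` and all `h j = 0`. -/
theorem stmt_10 (n : ℕ) (h₁ : MvPolynomial (Fin (n + 2)) ℂ)
    (h : Fin (n + 2) → MvPolynomial (Fin (n + 2)) ℂ)
    (hh₁ : h₁.IsHomogeneous 2) (hh : ∀ j, (h j).IsHomogeneous 2)
    (heq : 0 = h₁ * X 0 ^ 4 +
      ∑ j ∈ Finset.univ.filter (fun j : Fin (n + 2) => j ≠ 0),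
        h j * (X 0 + X j) ^ 4) :
    h₁ = 0 ∧ ∀ j : Fin (n + 2), j ≠ 0 → h j = 0 := by
  set S := Finset.univ.filter (fun j : Fin (n + 2) => j ≠ 0)
  have hS : ∀ j, j ≠ 0 → h j = 0 := by
    intro j hj
    have hjS : j ∈ S := by simp [S, hj]
    rw [← Finset.add_sum_erase S _ hjS, add_left_comm, eq_comm] at heq
    refine eq_zero_of_mul_add_eq_zero (i := j) ?_ heq
    rw [degreeOf_X_add_X_self_pow hj.symm]
    refine ((degreeOf_add_le j _ _).trans (max_le ?_ ?_)).trans_lt (by norm_num : 2 < 4)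
    · rw [degreeOf_mul_X_pow_of_ne 4 hj]
      exact hh₁.degreeOf_le j
    · refine (degreeOf_sum_le j _ _).trans (Finset.sup_le fun k hk => ?_)
      exact (degreeOf_mul_X_add_X_pow_le hj (Finset.ne_of_mem_erase hk).symm 4).trans
        ((hh k).degreeOf_le j)
  refine ⟨?_, hS⟩
  rw [Finset.sum_eq_zero fun k hk => by rw [hS k (Finset.mem_filter.mp hk).2, zero_mul],
    add_zero, eq_comm, mul_eq_zero] at heq
  exact heq.resolve_right (pow_ne_zero _ (X_ne_zero 0))
end

section
/- Suppose p ∈ ℂ[X1,...,Xn]_2 (n ≥ 3), q ∈ ℂ[X1,X2,X3]_2, λ, λ' ∈ ℂ, and ℓ, ℓ' ∈ ℂ[X1,...,Xn]_1 satisfy λq + ℓ·(X1 - Xn) = p = λ'q + ℓ'·(X1 - X_{n-1}) with n ≥ 6. Then ℓ involves only the variables X1 and X_{n-1}, and consequently p is a polynomial in the variables X1, X2, X3, X_{n-1}, Xn only. -/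
/-!
Compare the coefficients of `X j * X b` on both sides of
`λq + ℓ(X₁ - X_b) = λ'q + ℓ'(X₁ - X_a)` for `j ≠ X₁, X_a`: the terms in `q` vanish because
`X_b` does not occur in `q`, and the terms `ℓ X₁`, `ℓ' X₁`, `ℓ' X_a` do not contain this monomial.
What remains is `-[X j] ℓ = 0`, so the linear form `ℓ` only involves `X₁` and `X_a`, and then
`p = λq + ℓ(X₁ - X_b)` only involves the variables of `q` together with `X₁, X_a, X_b`.
-/

open MvPolynomial

namespace MvPolynomial

variable {σ R : Type*}

section CommSemiring

variable [CommSemiring R]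

theorem coeff_eq_zero_of_mem_supported {s : Set σ} {p : MvPolynomial σ R}
    (hp : p ∈ supported R s) {i : σ} (hi : i ∉ s) {m : σ →₀ ℕ} (hm : m i ≠ 0) :
    coeff m p = 0 := by
  by_contra hne
  exact hi (mem_supported.1 hp <|
    (mem_vars_iff_mem_support i).2 ⟨m, mem_support_iff.2 hne, Finsupp.mem_support_iff.2 hm⟩)

theorem coeff_mul_X_eq_zero {m : σ →₀ ℕ} {i : σ} (hm : m i = 0) (p : MvPolynomial σ R) :
    coeff m (p * X i) = 0 := by
  classical
  rw [coeff_mul_X', if_neg (Finsupp.notMem_support_iff.2 hm)]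

theorem IsHomogeneous.exists_eq_single_of_mem_support {φ : MvPolynomial σ R}
    (hφ : φ.IsHomogeneous 1) {d : σ →₀ ℕ} (hd : d ∈ φ.support) :
    ∃ j, d = Finsupp.single j 1 :=
  (Finsupp.sum_eq_one_iff d).1 <|
    (DFunLike.congr_fun Finsupp.degree_eq_weight_one d).trans (hφ (mem_support_iff.1 hd))

theorem IsHomogeneous.mem_supported_of_coeff_single {φ : MvPolynomial σ R}
    (hφ : φ.IsHomogeneous 1) {s : Set σ}
    (h : ∀ j ∉ s, coeff (Finsupp.single j 1) φ = 0) : φ ∈ supported R s := by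
  rw [mem_supported]
  intro j hj
  obtain ⟨d, hd, hjd⟩ := (mem_vars_iff_mem_support j).1 hj
  obtain ⟨k, rfl⟩ := hφ.exists_eq_single_of_mem_support hd
  obtain rfl : j = k := by simpa [Finsupp.mem_support_single] using hjd
  by_contra hjs
  exact mem_support_iff.1 hd (h j hjs)

end CommSemiring

variable [CommRing R]

theorem coeff_single_eq_zero_of_add_mul_X_sub_X_eq {s : Set σ} {q ℓ ℓ' : MvPolynomial σ R}
    {c c' : R} {i a b : σ} (hq : q ∈ supported R s) (hb : b ∉ s) (hbi : b ≠ i) (hba : b ≠ a)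
    (h : C c * q + ℓ * (X i - X b) = C c' * q + ℓ' * (X i - X a))
    {j : σ} (hji : j ≠ i) (hja : j ≠ a) :
    coeff (Finsupp.single j 1) ℓ = 0 := by
  set m := Finsupp.single j 1 + Finsupp.single b 1
  have hmi : m i = 0 := by simp [m, hji, hbi]
  have hma : m a = 0 := by simp [m, hja, hba]
  have hmq : coeff m q = 0 := coeff_eq_zero_of_mem_supported hq hb (by simp [m])
  have hm := congrArg (coeff m) h
  simpa [mul_sub, coeff_C_mul, hmq, coeff_mul_X_eq_zero hmi, coeff_mul_X_eq_zero hma, m,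
    coeff_mul_X] using hm

end MvPolynomial

open MvPolynomial

/-- In `n + 6 ≥ 6` variables (paper's `X₁` is `X 0`, `X_{n-1}` is `X ⟨n+4,_⟩`,
`X_n` is `X ⟨n+5,_⟩`): if `q` depends only on `X₁, X₂, X₃`, `ℓ, ℓ'` are linear
forms, and `λq + ℓ·(X₁ - X_n) = p = λ'q + ℓ'·(X₁ - X_{n-1})`, then `ℓ` involves
only `X₁` and `X_{n-1}`, and `p` is a polynomial in `X₁, X₂, X₃, X_{n-1}, X_n`
only. -/
theorem stmt_13 (n : ℕ) (p q ℓ ℓ' : MvPolynomial (Fin (n + 6)) ℂ) (lam lam' : ℂ)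
    (hq : q ∈ MvPolynomial.supported ℂ ({0, 1, 2} : Set (Fin (n + 6))))
    (hℓ : ℓ.IsHomogeneous 1)
    (h1 : C lam * q + ℓ * (X 0 - X ⟨n + 5, by omega⟩) = p)
    (h2 : p = C lam' * q + ℓ' * (X 0 - X ⟨n + 4, by omega⟩)) :
    ℓ ∈ MvPolynomial.supported ℂ ({0, ⟨n + 4, by omega⟩} : Set (Fin (n + 6))) ∧
    p ∈ MvPolynomial.supported ℂ
      ({0, 1, 2, ⟨n + 4, by omega⟩, ⟨n + 5, by omega⟩} : Set (Fin (n + 6))) := by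
  have hb : (⟨n + 5, by omega⟩ : Fin (n + 6)) ∉ ({0, 1, 2} : Set (Fin (n + 6))) := by
    simp [Fin.ext_iff, Nat.mod_eq_of_lt (show 2 < n + 6 by omega)]
  have hℓ_supp : ℓ ∈ supported ℂ ({0, ⟨n + 4, by omega⟩} : Set (Fin (n + 6))) :=
    hℓ.mem_supported_of_coeff_single fun j hj ↦ by
      simp only [Set.mem_insert_iff, Set.mem_singleton_iff, not_or] at hj
      exact coeff_single_eq_zero_of_add_mul_X_sub_X_eq hq hb (by simp [Fin.ext_iff])
        (by simp [Fin.ext_iff]) (h1.trans h2) hj.1 hj.2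
  refine ⟨hℓ_supp, h1 ▸ Subalgebra.add_mem _ (Subalgebra.mul_mem _ ?_ ?_)
    (Subalgebra.mul_mem _ ?_ (Subalgebra.sub_mem _ ?_ ?_))⟩
  · exact Subalgebra.algebraMap_mem _ lam
  · exact supported_mono (by intro x; simp only [Set.mem_insert_iff]; tauto) hq
  · exact supported_mono (by intro x; simp only [Set.mem_insert_iff]; tauto) hℓ_supp
  all_goals exact X_mem_supported.2 (by simp)
end
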